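/- arXiv:math-ph/0510058 — 2 statements merged into one kernel-verified Lean document; each statement's English description precedes it below -/
import Mathlib

section
/- Let A be an n×n Hermitian matrix with eigenvalues E^{(1)},...,E^{(n)} and an orthonormal basis of eigenvectors Ψ^{(1)},...,Ψ^{(n)}. Then for any E ∈ ℝ, η > 0, and any orthonormal basis e_1,...,e_n of ℂ^n, Σ_{k=1}^n |⟨(A − E − iη)^{-1} e_k, e_k⟩|^2 ≥ Σ_{j=1}^n (Σ_{k=1}^n |⟨e_k, Ψ^{(j)}⟩|^4) · (Im (E^{(j)} − E − iη)^{-1})^2. -/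
/-!
With `U` the unitary matrix whose columns are the `Ψ j`, the resolvent at `z = E + iη` is
`U * diagonal (fun j => (Ev j - z)⁻¹) * Uᴴ`, so the diagonal element at `e k` is
`∑ j, |⟨e k, Ψ j⟩|² (Ev j - z)⁻¹`. As `Im z > 0`, every summand has nonnegative imaginary part,
hence its squared modulus dominates `(∑ j, |⟨e k, Ψ j⟩|² Im (Ev j - z)⁻¹)²`, which in turn dominates
the sum of the squares of the terms. Summing over `k` gives the bound.
-/
open Matrix Finset

namespace Matrix

variable {ι κ R : Type*} [Fintype ι]

theorem mul_transpose_of_eq_of_mulVec_eq_smul [DecidableEq ι] [CommSemiring R] {A : Matrix ι ι R}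
    {Ψ : ι → ι → R} {d : ι → R} (h : ∀ j, A *ᵥ Ψ j = d j • Ψ j) :
    A * (of Ψ)ᵀ = (of Ψ)ᵀ * diagonal d := by
  ext i j
  rw [mul_diagonal]
  simpa [mulVec, dotProduct, mul_apply, mul_comm] using congrFun (h j) i

theorem conjTranspose_transpose_of_mul_transpose_of [Semiring R] [StarRing R] (Ψ : κ → ι → R) :
    (of Ψ)ᵀᴴ * (of Ψ)ᵀ = of fun j l => star (Ψ j) ⬝ᵥ Ψ l := by
  ext j l
  simp [mul_apply, dotProduct]

theorem inv_sub_smul_one_eq_of_mul_eq_mul_diagonal [DecidableEq ι] [Field R]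
    {A U V : Matrix ι ι R} {d : ι → R} {z : R} (hVU : V * U = 1) (hAU : A * U = U * diagonal d)
    (hz : ∀ j, d j ≠ z) :
    (A - z • 1)⁻¹ = U * diagonal (fun j => (d j - z)⁻¹) * V := by
  refine inv_eq_right_inv ?_
  have hshift : (A - z • 1) * U = U * diagonal (fun j => d j - z) := by
    rw [sub_mul, smul_mul, Matrix.one_mul, hAU]
    ext i j
    simp [mul_diagonal, mul_sub, mul_comm]
  calc (A - z • 1) * (U * diagonal (fun j => (d j - z)⁻¹) * V)
      = U * (diagonal (fun j => d j - z) * diagonal (fun j => (d j - z)⁻¹)) * V := by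
        rw [← Matrix.mul_assoc, ← Matrix.mul_assoc, hshift, Matrix.mul_assoc U]
    _ = 1 := by
        rw [diagonal_mul_diagonal]
        simp [mul_inv_cancel₀ (sub_ne_zero.2 (hz _)), mul_eq_one_comm.mp hVU]

theorem star_dotProduct_mul_diagonal_mul_conjTranspose_mulVec {𝕜 : Type*} [RCLike 𝕜]
    [Fintype κ] [DecidableEq κ] (U : Matrix ι κ 𝕜) (w : κ → 𝕜) (x : ι → 𝕜) :
    star x ⬝ᵥ (U * diagonal w * Uᴴ) *ᵥ x = ∑ j, (‖(star x ᵥ* U) j‖ ^ 2 : 𝕜) * w j := by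
  have hx : Uᴴ *ᵥ x = star (star x ᵥ* U) := by rw [star_vecMul, star_star]
  rw [← mulVec_mulVec, ← mulVec_mulVec, dotProduct_mulVec, hx]
  refine sum_congr rfl fun j _ => ?_
  rw [mulVec_diagonal, ← RCLike.mul_conj]
  simp only [Pi.star_apply, RCLike.star_def]
  ring

end Matrix

theorem Complex.sum_sq_mul_im_le_norm_sum_sq {ι : Type*} (s : Finset ι) {p : ι → ℝ} {w : ι → ℂ}
    (hp : ∀ j ∈ s, 0 ≤ p j) (hw : ∀ j ∈ s, 0 ≤ (w j).im) :
    ∑ j ∈ s, (p j * (w j).im) ^ 2 ≤ ‖∑ j ∈ s, (p j : ℂ) * w j‖ ^ 2 := by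
  calc ∑ j ∈ s, (p j * (w j).im) ^ 2 ≤ (∑ j ∈ s, p j * (w j).im) ^ 2 :=
        sum_sq_le_sq_sum_of_nonneg fun j hj => mul_nonneg (hp j hj) (hw j hj)
    _ = |(∑ j ∈ s, (p j : ℂ) * w j).im| ^ 2 := by simp [Complex.im_sum]
    _ ≤ ‖∑ j ∈ s, (p j : ℂ) * w j‖ ^ 2 := by gcongr; exact Complex.abs_im_le_norm _

theorem Complex.inv_im_pos_of_im_neg {z : ℂ} (hz : z.im < 0) : 0 < z⁻¹.im := by
  rw [Complex.inv_im]
  have : z ≠ 0 := fun h => by simp [h] at hz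
  exact div_pos (neg_pos.2 hz) (Complex.normSq_pos.2 this)

theorem resolvent_diagonal_lower_bound_general (n : ℕ) (A : Matrix (Fin n) (Fin n) ℂ)
    (Ev : Fin n → ℝ) (Ψ e : Fin n → (Fin n → ℂ))
    (hΨon : ∀ j l, star (Ψ j) ⬝ᵥ Ψ l = if j = l then 1 else 0)
    (heig : ∀ j, A.mulVec (Ψ j) = (Ev j : ℂ) • Ψ j)
    (E η : ℝ) (hη : 0 < η) :
    ∑ j, (∑ k, ‖star (e k) ⬝ᵥ Ψ j‖ ^ 4) *
        ((((Ev j : ℂ) - E - η * Complex.I)⁻¹).im) ^ 2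
      ≤ ∑ k, ‖star (e k) ⬝ᵥ
          (A - ((E : ℂ) + η * Complex.I) • (1 : Matrix (Fin n) (Fin n) ℂ))⁻¹.mulVec (e k)‖ ^ 2 := by
  set z : ℂ := E + η * Complex.I
  have hUU : (of Ψ)ᵀᴴ * (of Ψ)ᵀ = 1 := by
    rw [conjTranspose_transpose_of_mul_transpose_of]
    ext j l
    simp [hΨon, one_apply]
  have hz : ∀ j, (Ev j : ℂ) ≠ z := fun j h =>
    hη.ne (by simpa [z] using congrArg Complex.im h)
  have hdiag : ∀ k, star (e k) ⬝ᵥ (A - z • 1)⁻¹ *ᵥ e k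
      = ∑ j, ((‖star (e k) ⬝ᵥ Ψ j‖ ^ 2 : ℝ) : ℂ) * ((Ev j : ℂ) - E - η * Complex.I)⁻¹ := by
    intro k
    rw [inv_sub_smul_one_eq_of_mul_eq_mul_diagonal hUU
        (mul_transpose_of_eq_of_mulVec_eq_smul heig) hz,
      star_dotProduct_mul_diagonal_mul_conjTranspose_mulVec]
    simp [z, sub_add_eq_sub_sub, vecMul_transpose, mulVec, dotProduct_comm]
  have hinv_im : ∀ j, 0 ≤ ((Ev j : ℂ) - E - η * Complex.I)⁻¹.im := fun j =>
    (Complex.inv_im_pos_of_im_neg (by simpa using hη)).le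
  calc _ = ∑ k, ∑ j, (‖star (e k) ⬝ᵥ Ψ j‖ ^ 2 * ((Ev j : ℂ) - E - η * Complex.I)⁻¹.im) ^ 2 := by
        simp_rw [sum_mul]
        rw [sum_comm]
        exact sum_congr rfl fun k _ => sum_congr rfl fun j _ => by ring
    _ ≤ _ := sum_le_sum fun k _ =>
        (Complex.sum_sq_mul_im_le_norm_sum_sq _ (fun j _ => by positivity)
          (fun j _ => hinv_im j)).trans_eq (by rw [hdiag])

/-- Lemma 5.14: lower bound for the sum of squares of diagonal resolvent matrix
elements in terms of eigenvector overlaps. -/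
theorem resolvent_diagonal_lower_bound (n : ℕ) (A : Matrix (Fin n) (Fin n) ℂ)
    (hA : A.IsHermitian) (Ev : Fin n → ℝ) (Ψ e : Fin n → (Fin n → ℂ))
    (hΨon : ∀ j l, star (Ψ j) ⬝ᵥ Ψ l = if j = l then 1 else 0)
    (heon : ∀ k l, star (e k) ⬝ᵥ e l = if k = l then 1 else 0)
    (heig : ∀ j, A.mulVec (Ψ j) = (Ev j : ℂ) • Ψ j)
    (E η : ℝ) (hη : 0 < η) :
    ∑ j, (∑ k, ‖star (e k) ⬝ᵥ Ψ j‖ ^ 4) *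
        ((((Ev j : ℂ) - E - η * Complex.I)⁻¹).im) ^ 2
      ≤ ∑ k, ‖star (e k) ⬝ᵥ
          (A - ((E : ℂ) + η * Complex.I) • (1 : Matrix (Fin n) (Fin n) ℂ))⁻¹.mulVec (e k)‖ ^ 2 :=
  resolvent_diagonal_lower_bound_general n A Ev Ψ e hΨon heig E η hη
end

section
/- Let φ be an analytic function on the disk D(0, r) ⊂ ℂ and η > 0. Then the two-dimensional Lebesgue measure of the set {w ∈ ℂ : w = φ(z) for some z ∈ D(0,r) with |φ'(z)| < η} is at most π r² η². -/
/-!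
A holomorphic map acts on tangent vectors as multiplication by `φ'(z)`, whose real Jacobian
determinant is `|φ'(z)|²`. The area formula bounds the area of the image of the near-critical
set by the integral of this Jacobian over it, hence by `η²` times the area `π r²` of the disk.
-/

open MeasureTheory

lemma Complex.det_restrictScalars_toSpanSingleton (c : ℂ) :
    ((ContinuousLinearMap.toSpanSingleton ℂ c).restrictScalars ℝ).det = ‖c‖ ^ 2 := by
  simp [ContinuousLinearMap.det, LinearMap.det_restrictScalars, Algebra.norm_complex_eq,
    Complex.normSq_eq_norm_sq]

lemma Complex.volume_ball_le (a : ℂ) (r : ℝ) :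
    volume (Metric.ball a r) ≤ ENNReal.ofReal (Real.pi * r ^ 2) := by
  rcases le_or_gt r 0 with hr | hr
  · simp [Metric.ball_eq_empty.2 hr]
  · rw [Complex.volume_ball, ← ENNReal.ofReal_pow hr.le, ← NNReal.coe_real_pi,
      ENNReal.ofReal_mul NNReal.pi.coe_nonneg, ENNReal.ofReal_coe_nnreal, mul_comm]

lemma Complex.volume_image_le_of_norm_deriv_le {f f' : ℂ → ℂ} {s : Set ℂ} {η : ℝ}
    (hs : MeasurableSet s) (hf : ∀ z ∈ s, HasDerivWithinAt f (f' z) s z)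
    (hf' : ∀ z ∈ s, ‖f' z‖ ≤ η) :
    volume (f '' s) ≤ ENNReal.ofReal (η ^ 2) * volume s := by
  calc volume (f '' s)
      ≤ ∫⁻ z in s, ENNReal.ofReal
          |((ContinuousLinearMap.toSpanSingleton ℂ (f' z)).restrictScalars ℝ).det| :=
        addHaar_image_le_lintegral_abs_det_fderiv volume hs fun z hz ↦
          (hf z hz).hasFDerivWithinAt.restrictScalars ℝ
    _ ≤ ∫⁻ _ in s, ENNReal.ofReal (η ^ 2) := by
        refine setLIntegral_mono measurable_const fun z hz ↦ ENNReal.ofReal_le_ofReal ?_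
        rw [Complex.det_restrictScalars_toSpanSingleton, abs_of_nonneg (sq_nonneg _)]
        exact pow_le_pow_left₀ (norm_nonneg _) (hf' z hz) 2
    _ = ENNReal.ofReal (η ^ 2) * volume s := setLIntegral_const s _

theorem analytic_near_critical_image_area_general (φ : ℂ → ℂ) (r η : ℝ)
    (hφ : ∀ z ∈ Metric.ball (0 : ℂ) r, AnalyticAt ℂ φ z) :
    volume (φ '' {z ∈ Metric.ball (0 : ℂ) r | ‖deriv φ z‖ < η})
      ≤ ENNReal.ofReal (Real.pi * r ^ 2 * η ^ 2) := by
  set s := {z ∈ Metric.ball (0 : ℂ) r | ‖deriv φ z‖ < η}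
  have hs : MeasurableSet s :=
    measurableSet_ball.inter ((measurable_deriv φ).norm measurableSet_Iio)
  have hderiv : ∀ z ∈ s, HasDerivWithinAt φ (deriv φ z) s z := fun z hz ↦
    (hφ z hz.1).differentiableAt.hasDerivAt.hasDerivWithinAt
  calc volume (φ '' s)
      ≤ ENNReal.ofReal (η ^ 2) * volume s :=
        Complex.volume_image_le_of_norm_deriv_le hs hderiv fun z hz ↦ hz.2.le
    _ ≤ ENNReal.ofReal (η ^ 2) * ENNReal.ofReal (Real.pi * r ^ 2) := by
        gcongr
        exact (measure_mono (Set.sep_subset _ _)).trans (Complex.volume_ball_le 0 r)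
    _ = ENNReal.ofReal (Real.pi * r ^ 2 * η ^ 2) := by
        rw [← ENNReal.ofReal_mul (sq_nonneg η), mul_comm]

/-- Sard-type area estimate: the image of the near-critical set
{z ∈ D(0,r) : |φ'(z)| < η} under an analytic map φ has area at most πr²η². -/
theorem analytic_near_critical_image_area (φ : ℂ → ℂ) (r η : ℝ)
    (hr : 0 < r) (hη : 0 < η)
    (hφ : ∀ z ∈ Metric.ball (0 : ℂ) r, AnalyticAt ℂ φ z) :
    volume (φ '' {z ∈ Metric.ball (0 : ℂ) r | ‖deriv φ z‖ < η})
      ≤ ENNReal.ofReal (Real.pi * r ^ 2 * η ^ 2) :=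
  analytic_near_critical_image_area_general φ r η hφ
end
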